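/- With the setup of an isothermal coordinate w on S² with metric e^σ|dw|² and σ_{ww̄} = −(1/2)e^σ, if f is holomorphic then (Δ̂ + 2)(f_w + σ_w f) = 0, where Δ̂ = 4e^{−σ}∂_w∂_{w̄}. Consequently Q := −(1/2)σ_w f satisfies Δ̂(Δ̂Q + 2Q) = 0, and the real and imaginary parts of Q are real solutions of Δ̂(Δ̂u + 2u) = 0. -/

import Mathlib

/- STATEMENT 17: with σ_{ww̄} = −½e^σ and f holomorphic, (Δ̂+2)(f_w + σ_w f) = 0;
consequently Q := −½σ_w f satisfies Δ̂(Δ̂Q + 2Q) = 0, and the real and imaginary parts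
of Q are real solutions of Δ̂(Δ̂u + 2u) = 0. -/
noncomputable section
open Complex

/-- Wirtinger derivative ∂/∂w -/
def wder (f : ℂ → ℂ) (z : ℂ) : ℂ :=
  (fderiv ℝ f z 1 - Complex.I * fderiv ℝ f z Complex.I) / 2

/-- Wirtinger derivative ∂/∂w̄ -/
def wbar (f : ℂ → ℂ) (z : ℂ) : ℂ :=
  (fderiv ℝ f z 1 + Complex.I * fderiv ℝ f z Complex.I) / 2

/-- the Laplace–Beltrami operator Δ̂u = 4e^{−σ}∂_w∂_{w̄}u of the metric e^σ|dw|² -/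
def confLap (σ : ℂ → ℂ) (u : ℂ → ℂ) (z : ℂ) : ℂ :=
  4 * Complex.exp (-σ z) * wder (wbar u) z

section helpers
variable {U : Set ℂ} {u v : ℂ → ℂ} {z : ℂ}

lemma diffAt_of_smoothOn (hU : IsOpen U) (hu : ContDiffOn ℝ (⊤ : ℕ∞) u U) (hz : z ∈ U) :
    DifferentiableAt ℝ u z :=
  (hu.contDiffAt (hU.mem_nhds hz)).differentiableAt (by simp)

lemma wder_congr (hU : IsOpen U) (h : ∀ w ∈ U, u w = v w) (hz : z ∈ U) :
    wder u z = wder v z := by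
  have he : u =ᶠ[nhds z] v := Filter.eventuallyEq_of_mem (hU.mem_nhds hz) h
  rw [wder, wder, he.fderiv_eq]

lemma wbar_congr (hU : IsOpen U) (h : ∀ w ∈ U, u w = v w) (hz : z ∈ U) :
    wbar u z = wbar v z := by
  have he : u =ᶠ[nhds z] v := Filter.eventuallyEq_of_mem (hU.mem_nhds hz) h
  rw [wbar, wbar, he.fderiv_eq]

lemma wder_zero_of_eqOn (hU : IsOpen U) (h : ∀ w ∈ U, u w = 0) (hz : z ∈ U) :
    wder u z = 0 := by
  rw [wder_congr hU h hz (v := fun _ => 0)]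
  simp [wder]

lemma wder_add (hu : DifferentiableAt ℝ u z) (hv : DifferentiableAt ℝ v z) :
    wder (fun w => u w + v w) z = wder u z + wder v z := by
  simp only [wder, fderiv_fun_add hu hv, ContinuousLinearMap.add_apply]; ring

lemma wbar_add (hu : DifferentiableAt ℝ u z) (hv : DifferentiableAt ℝ v z) :
    wbar (fun w => u w + v w) z = wbar u z + wbar v z := by
  simp only [wbar, fderiv_fun_add hu hv, ContinuousLinearMap.add_apply]; ring

lemma wder_const_mul (hu : DifferentiableAt ℝ u z) (c : ℂ) :
    wder (fun w => c * u w) z = c * wder u z := by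
  simp only [wder, fderiv_const_mul hu c, ContinuousLinearMap.smul_apply, smul_eq_mul]; ring

lemma wbar_const_mul (hu : DifferentiableAt ℝ u z) (c : ℂ) :
    wbar (fun w => c * u w) z = c * wbar u z := by
  simp only [wbar, fderiv_const_mul hu c, ContinuousLinearMap.smul_apply, smul_eq_mul]; ring

lemma wder_mul (hu : DifferentiableAt ℝ u z) (hv : DifferentiableAt ℝ v z) :
    wder (fun w => u w * v w) z = wder u z * v z + u z * wder v z := by
  simp only [wder, fderiv_fun_mul hu hv, ContinuousLinearMap.add_apply,
    ContinuousLinearMap.smul_apply, smul_eq_mul]; ring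

lemma wbar_mul (hu : DifferentiableAt ℝ u z) (hv : DifferentiableAt ℝ v z) :
    wbar (fun w => u w * v w) z = wbar u z * v z + u z * wbar v z := by
  simp only [wbar, fderiv_fun_mul hu hv, ContinuousLinearMap.add_apply,
    ContinuousLinearMap.smul_apply, smul_eq_mul]; ring

lemma wder_cexp (hu : DifferentiableAt ℝ u z) :
    wder (fun w => Complex.exp (u w)) z = Complex.exp (u z) * wder u z := by
  have h := (hu.hasFDerivAt.cexp).fderiv
  simp only [wder, h, ContinuousLinearMap.smul_apply, smul_eq_mul]; ring

lemma fderiv_conj (hu : DifferentiableAt ℝ u z) (y : ℂ) :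
    fderiv ℝ (fun w => (starRingEnd ℂ) (u w)) z y = (starRingEnd ℂ) (fderiv ℝ u z y) := by
  have h := (hu.hasFDerivAt.star).fderiv
  rw [show (fun w => (starRingEnd ℂ) (u w)) = (fun w => star (u w)) from rfl, h]
  simp

lemma wbar_conj (hu : DifferentiableAt ℝ u z) :
    wbar (fun w => (starRingEnd ℂ) (u w)) z = (starRingEnd ℂ) (wder u z) := by
  simp only [wbar, wder, fderiv_conj hu, map_div₀, map_sub, map_mul, Complex.conj_I, map_ofNat]
  ring

lemma wder_conj (hu : DifferentiableAt ℝ u z) :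
    wder (fun w => (starRingEnd ℂ) (u w)) z = (starRingEnd ℂ) (wbar u z) := by
  simp only [wbar, wder, fderiv_conj hu, map_div₀, map_add, map_mul, Complex.conj_I, map_ofNat]
  ring

lemma contDiffOn_wder (hU : IsOpen U) (hu : ContDiffOn ℝ (⊤ : ℕ∞) u U) :
    ContDiffOn ℝ (⊤ : ℕ∞) (wder u) U := by
  have hD : ContDiffOn ℝ (⊤ : ℕ∞) (fderiv ℝ u) U := hu.fderiv_of_isOpen hU (by simp)
  have h1 : ContDiffOn ℝ (⊤ : ℕ∞) (fun w => fderiv ℝ u w 1) U := hD.clm_apply contDiffOn_const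
  have h2 : ContDiffOn ℝ (⊤ : ℕ∞) (fun w => fderiv ℝ u w Complex.I) U := hD.clm_apply contDiffOn_const
  exact ((h1.sub (contDiffOn_const.mul h2)).div_const 2)

lemma contDiffOn_wbar (hU : IsOpen U) (hu : ContDiffOn ℝ (⊤ : ℕ∞) u U) :
    ContDiffOn ℝ (⊤ : ℕ∞) (wbar u) U := by
  have hD : ContDiffOn ℝ (⊤ : ℕ∞) (fderiv ℝ u) U := hu.fderiv_of_isOpen hU (by simp)
  have h1 : ContDiffOn ℝ (⊤ : ℕ∞) (fun w => fderiv ℝ u w 1) U := hD.clm_apply contDiffOn_const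
  have h2 : ContDiffOn ℝ (⊤ : ℕ∞) (fun w => fderiv ℝ u w Complex.I) U := hD.clm_apply contDiffOn_const
  exact ((h1.add (contDiffOn_const.mul h2)).div_const 2)

lemma wder_wbar_comm (hU : IsOpen U) (hu : ContDiffOn ℝ (⊤ : ℕ∞) u U) (hz : z ∈ U) :
    wder (wbar u) z = wbar (wder u) z := by
  have hD : ContDiffOn ℝ (⊤ : ℕ∞) (fderiv ℝ u) U := hu.fderiv_of_isOpen hU (by simp)
  have hDdiff : DifferentiableAt ℝ (fderiv ℝ u) z := (hD.contDiffAt (hU.mem_nhds hz)).differentiableAt (by simp)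
  set D2 := fderiv ℝ (fderiv ℝ u) z with hD2def
  have hD2 : HasFDerivAt (fderiv ℝ u) D2 z := hDdiff.hasFDerivAt
  have hev : ∀ᶠ y in nhds z, HasFDerivAt u (fderiv ℝ u y) y := by
    filter_upwards [hU.mem_nhds hz] with y hy
    exact (diffAt_of_smoothOn hU hu hy).hasFDerivAt
  have hsymm := second_derivative_symmetric_of_eventually hev hD2
  have h1 : HasFDerivAt (fun w => fderiv ℝ u w 1) (D2.flip 1) z := by
    have := hD2.clm_apply (hasFDerivAt_const (1:ℂ) z)
    simpa using this
  have hI : HasFDerivAt (fun w => fderiv ℝ u w Complex.I) (D2.flip Complex.I) z := by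
    have := hD2.clm_apply (hasFDerivAt_const (Complex.I) z)
    simpa using this
  have heqb : wbar u = fun w => (1/2 : ℂ) * (fderiv ℝ u w 1) + (Complex.I/2) * (fderiv ℝ u w Complex.I) := by
    funext w; rw [wbar]; ring
  have heqd : wder u = fun w => (1/2 : ℂ) * (fderiv ℝ u w 1) - (Complex.I/2) * (fderiv ℝ u w Complex.I) := by
    funext w; rw [wder]; ring
  have h2b : HasFDerivAt (wbar u)
      (((1:ℂ)/2) • (D2.flip 1) + (Complex.I/2) • (D2.flip Complex.I)) z := by
    rw [heqb]; exact (h1.const_mul _).add (hI.const_mul _)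
  have h2d : HasFDerivAt (wder u)
      (((1:ℂ)/2) • (D2.flip 1) - (Complex.I/2) • (D2.flip Complex.I)) z := by
    rw [heqd]; exact (h1.const_mul _).sub (hI.const_mul _)
  rw [wder, wbar, h2b.fderiv, h2d.fderiv]
  simp only [ContinuousLinearMap.add_apply, ContinuousLinearMap.sub_apply,
    ContinuousLinearMap.smul_apply, ContinuousLinearMap.flip_apply, smul_eq_mul]
  linear_combination (Complex.I/2) * hsymm 1 Complex.I

end helpers

lemma contDiffOn_conj {U : Set ℂ} {u : ℂ → ℂ} (hu : ContDiffOn ℝ (⊤ : ℕ∞) u U) :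
    ContDiffOn ℝ (⊤ : ℕ∞) (fun w => (starRingEnd ℂ) (u w)) U := by
  have h : ContDiff ℝ (⊤ : ℕ∞) (fun z : ℂ => (starRingEnd ℂ) z) := by
    have h0 := (Complex.conjCLE.toContinuousLinearMap).contDiff (n := (⊤ : WithTop ℕ∞)) (𝕜 := ℝ)
    have he : ⇑(Complex.conjCLE.toContinuousLinearMap) = fun z : ℂ => (starRingEnd ℂ) z := by
      funext z; simp
    rw [he] at h0; exact h0.of_le le_top
  exact h.comp_contDiffOn hu

lemma re_eq_comb (x : ℂ) :
    ((x.re : ℝ) : ℂ) = (1/2 : ℂ) * x + (1/2 : ℂ) * (starRingEnd ℂ) x := by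
  have h := Complex.add_conj x
  push_cast at h
  linear_combination (-(1/2 : ℂ)) * h

lemma im_eq_comb (x : ℂ) :
    ((x.im : ℝ) : ℂ) = (-(Complex.I)/2) * x + (Complex.I/2) * (starRingEnd ℂ) x := by
  have h := Complex.sub_conj x
  push_cast at h
  linear_combination (Complex.I/2) * h + (x.im : ℂ) * Complex.I_sq

theorem stmt17_biharmonic_solutions_from_holomorphic_data
    (U : Set ℂ) (hU : IsOpen U)
    (σ f : ℂ → ℂ) (hσ : ContDiffOn ℝ (⊤ : ℕ∞) σ U) (hfsm : ContDiffOn ℝ (⊤ : ℕ∞) f U)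
    (hσreal : ∀ z ∈ U, (σ z).im = 0)
    (hLiouville : ∀ z ∈ U, wbar (wder σ) z = -(1/2) * Complex.exp (σ z))
    (hf : ∀ z ∈ U, wbar f z = 0) :
    -- (Δ̂+2)(f_w + σ_w f) = 0 :
    (∀ z ∈ U, confLap σ (fun w => wder f w + wder σ w * f w) z
        + 2 * (wder f z + wder σ z * f z) = 0) ∧
    -- hence Q = −½σ_w f solves Δ̂(Δ̂Q + 2Q) = 0 :
    (∀ z ∈ U, confLap σ
        (fun w => confLap σ (fun v => -(1/2) * wder σ v * f v) w
          + 2 * (-(1/2) * wder σ w * f w)) z = 0) ∧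
    -- and its real and imaginary parts are real solutions of Δ̂(Δ̂u + 2u) = 0 :
    (∀ z ∈ U, confLap σ
        (fun w => confLap σ (fun v => ((-(1/2) * wder σ v * f v).re : ℂ)) w
          + 2 * ((-(1/2) * wder σ w * f w).re : ℂ)) z = 0) ∧
    (∀ z ∈ U, confLap σ
        (fun w => confLap σ (fun v => ((-(1/2) * wder σ v * f v).im : ℂ)) w
          + 2 * ((-(1/2) * wder σ w * f w).im : ℂ)) z = 0) := by
  have hdiff : ∀ (u : ℂ → ℂ), ContDiffOn ℝ (⊤ : ℕ∞) u U → ∀ z ∈ U, DifferentiableAt ℝ u z :=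
    fun u hu z hz => diffAt_of_smoothOn hU hu hz
  set A : ℂ → ℂ := wder σ with hAdef
  set F : ℂ → ℂ := wder f with hFdef
  have hAsm : ContDiffOn ℝ (⊤ : ℕ∞) A U := contDiffOn_wder hU hσ
  have hFsm : ContDiffOn ℝ (⊤ : ℕ∞) F U := contDiffOn_wder hU hfsm
  have hAf_sm : ContDiffOn ℝ (⊤ : ℕ∞) (fun w => A w * f w) U := hAsm.mul hfsm
  have hexpf_sm : ContDiffOn ℝ (⊤ : ℕ∞) (fun w => Complex.exp (σ w) * f w) U := hσ.cexp.mul hfsm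
  have hwbarA : ∀ z ∈ U, wbar A z = -(1/2) * Complex.exp (σ z) := hLiouville
  have hwbarF : ∀ z ∈ U, wbar F z = 0 := by
    intro z hz
    rw [hFdef, ← wder_wbar_comm hU hfsm hz]
    exact wder_zero_of_eqOn hU hf hz
  have hexp : ∀ z : ℂ, Complex.exp (-σ z) * Complex.exp (σ z) = 1 := by
    intro z; rw [← Complex.exp_add]; simp
  -- Part 1
  have hconfg : ∀ z ∈ U, confLap σ (fun w => F w + A w * f w) z
      = -2 * (F z + A z * f z) := by
    intro z hz
    have hwbarg : ∀ w ∈ U, wbar (fun w => F w + A w * f w) w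
        = -(1/2) * (Complex.exp (σ w) * f w) := by
      intro w hw
      rw [wbar_add (hdiff F hFsm w hw) (hdiff _ hAf_sm w hw),
          wbar_mul (hdiff A hAsm w hw) (hdiff f hfsm w hw),
          hwbarF w hw, hwbarA w hw, hf w hw]
      ring
    rw [confLap, wder_congr hU hwbarg hz,
        wder_const_mul (hdiff _ hexpf_sm z hz),
        wder_mul (hdiff _ hσ.cexp z hz) (hdiff f hfsm z hz),
        wder_cexp (hdiff σ hσ z hz)]
    linear_combination (-2 * (A z * f z + F z)) * hexp z
  have part1 : ∀ z ∈ U, confLap σ (fun w => F w + A w * f w) z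
      + 2 * (F z + A z * f z) = 0 := by
    intro z hz; rw [hconfg z hz]; ring
  -- Q and its conjugate
  set Q : ℂ → ℂ := fun v => -(1/2) * A v * f v with hQdef
  set Qb : ℂ → ℂ := fun v => (starRingEnd ℂ) (Q v) with hQbdef
  have hQsm : ContDiffOn ℝ (⊤ : ℕ∞) Q U := (contDiffOn_const.mul hAsm).mul hfsm
  have hQbsm : ContDiffOn ℝ (⊤ : ℕ∞) Qb U := contDiffOn_conj hQsm
  have hwbarQ : ∀ z ∈ U, wbar Q z = (1/4) * (Complex.exp (σ z) * f z) := by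
    intro z hz
    have hre : Q = fun v => (-(1/2) : ℂ) * (A v * f v) := by
      rw [hQdef]; funext v; ring
    rw [hre, wbar_const_mul (hdiff _ hAf_sm z hz),
        wbar_mul (hdiff A hAsm z hz) (hdiff f hfsm z hz), hwbarA z hz, hf z hz]
    ring
  have hconfQ : ∀ z ∈ U, confLap σ Q z = F z + A z * f z := by
    intro z hz
    rw [confLap, wder_congr hU hwbarQ hz,
        wder_const_mul (hdiff _ hexpf_sm z hz),
        wder_mul (hdiff _ hσ.cexp z hz) (hdiff f hfsm z hz),
        wder_cexp (hdiff σ hσ z hz)]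
    linear_combination (A z * f z + F z) * hexp z
  have hE : ∀ w ∈ U, confLap σ Q w + 2 * Q w = F w := by
    intro w hw; rw [hconfQ w hw]; simp only [hQdef]; ring
  have hconjexp : ∀ z ∈ U, (starRingEnd ℂ) (Complex.exp (-σ z)) = Complex.exp (-σ z) := by
    intro z hz
    rw [← Complex.exp_conj, map_neg, Complex.conj_eq_iff_im.mpr (hσreal z hz)]
  have hconfQb : ∀ z ∈ U, confLap σ Qb z = (starRingEnd ℂ) (confLap σ Q z) := by
    intro z hz
    have hwbarQb : ∀ w ∈ U, wbar Qb w = (starRingEnd ℂ) (wder Q w) := by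
      intro w hw; rw [hQbdef]; exact wbar_conj (hdiff Q hQsm w hw)
    rw [confLap, confLap, wder_congr hU hwbarQb hz,
        wder_conj (hdiff _ (contDiffOn_wder hU hQsm) z hz),
        ← wder_wbar_comm hU hQsm hz]
    simp only [map_mul, map_ofNat, hconjexp z hz]
  have hEb : ∀ w ∈ U, confLap σ Qb w + 2 * Qb w = (starRingEnd ℂ) (F w) := by
    intro w hw
    rw [hconfQb w hw, ← hE w hw]
    simp only [hQbdef, map_add, map_mul, map_ofNat]
  -- the key computation
  have key : ∀ c d : ℂ, ∀ z ∈ U,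
      confLap σ (fun w => confLap σ (fun v => c * Q v + d * Qb v) w
        + 2 * (c * Q w + d * Qb w)) z = 0 := by
    intro c d z hz
    set S : ℂ → ℂ := fun v => c * Q v + d * Qb v with hSdef
    have hSsm : ContDiffOn ℝ (⊤ : ℕ∞) S U := (contDiffOn_const.mul hQsm).add (contDiffOn_const.mul hQbsm)
    have hwbarS : ∀ w ∈ U, wbar S w = c * wbar Q w + d * wbar Qb w := by
      intro w hw
      rw [hSdef, wbar_add ((hdiff Q hQsm w hw).const_mul c) ((hdiff Qb hQbsm w hw).const_mul d),
          wbar_const_mul (hdiff Q hQsm w hw) c, wbar_const_mul (hdiff Qb hQbsm w hw) d]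
    have hconfS : ∀ w ∈ U, confLap σ S w = c * confLap σ Q w + d * confLap σ Qb w := by
      intro w hw
      have hwbQ : ContDiffOn ℝ (⊤ : ℕ∞) (wbar Q) U := contDiffOn_wbar hU hQsm
      have hwbQb : ContDiffOn ℝ (⊤ : ℕ∞) (wbar Qb) U := contDiffOn_wbar hU hQbsm
      rw [confLap, confLap, confLap, wder_congr hU hwbarS hw,
          wder_add ((hdiff _ hwbQ w hw).const_mul c) ((hdiff _ hwbQb w hw).const_mul d),
          wder_const_mul (hdiff _ hwbQ w hw) c, wder_const_mul (hdiff _ hwbQb w hw) d]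
      ring
    have hRS : ∀ w ∈ U, confLap σ S w + 2 * (c * Q w + d * Qb w)
        = c * F w + d * (starRingEnd ℂ) (F w) := by
      intro w hw
      rw [hconfS w hw]
      linear_combination c * hE w hw + d * hEb w hw
    have hconjF_sm : ContDiffOn ℝ (⊤ : ℕ∞) (fun w => (starRingEnd ℂ) (F w)) U := contDiffOn_conj hFsm
    have hwbouter : ∀ w ∈ U,
        wbar (fun w => confLap σ S w + 2 * (c * Q w + d * Qb w)) w
        = d * ((starRingEnd ℂ) (wder F w)) := by
      intro w hw
      rw [wbar_congr hU hRS hw,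
          wbar_add ((hdiff F hFsm w hw).const_mul c) ((hdiff _ hconjF_sm w hw).const_mul d),
          wbar_const_mul (hdiff F hFsm w hw) c, wbar_const_mul (hdiff _ hconjF_sm w hw) d,
          hwbarF w hw, wbar_conj (hdiff F hFsm w hw)]
      ring
    have hconjwF_sm : ContDiffOn ℝ (⊤ : ℕ∞) (fun w => (starRingEnd ℂ) (wder F w)) U :=
      contDiffOn_conj (contDiffOn_wder hU hFsm)
    rw [confLap, wder_congr hU hwbouter hz,
        wder_const_mul (hdiff _ hconjwF_sm z hz) d,
        wder_conj (hdiff _ (contDiffOn_wder hU hFsm) z hz),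
        ← wder_wbar_comm hU hFsm hz,
        wder_zero_of_eqOn hU hwbarF hz]
    simp
  refine ⟨part1, ?_, ?_, ?_⟩
  · intro z hz
    have e : (fun w => confLap σ Q w + 2 * (-(1/2) * A w * f w))
        = (fun w => confLap σ (fun v => (1:ℂ) * Q v + (0:ℂ) * Qb v) w
            + 2 * ((1:ℂ) * Q w + (0:ℂ) * Qb w)) := by
      funext w
      have h1 : (fun v => (1:ℂ) * Q v + (0:ℂ) * Qb v) = Q := by funext v; ring
      rw [h1]; simp only [hQdef]; ring
    rw [e]; exact key 1 0 z hz
  · intro z hz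
    have h1 : (fun v => (((-(1/2) * A v * f v).re : ℝ) : ℂ))
        = (fun v => (1/2:ℂ) * Q v + (1/2:ℂ) * Qb v) := by
      funext v; rw [re_eq_comb]
    have e : (fun w => confLap σ (fun v => (((-(1/2) * A v * f v).re : ℝ) : ℂ)) w
          + 2 * (((-(1/2) * A w * f w).re : ℝ) : ℂ))
        = (fun w => confLap σ (fun v => (1/2:ℂ) * Q v + (1/2:ℂ) * Qb v) w
            + 2 * ((1/2:ℂ) * Q w + (1/2:ℂ) * Qb w)) := by
      funext w
      rw [h1, re_eq_comb]
    rw [e]; exact key (1/2) (1/2) z hz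
  · intro z hz
    have h1 : (fun v => (((-(1/2) * A v * f v).im : ℝ) : ℂ))
        = (fun v => (-(Complex.I)/2) * Q v + (Complex.I/2) * Qb v) := by
      funext v; rw [im_eq_comb]
    have e : (fun w => confLap σ (fun v => (((-(1/2) * A v * f v).im : ℝ) : ℂ)) w
          + 2 * (((-(1/2) * A w * f w).im : ℝ) : ℂ))
        = (fun w => confLap σ (fun v => (-(Complex.I)/2) * Q v + (Complex.I/2) * Qb v) w
            + 2 * ((-(Complex.I)/2) * Q w + (Complex.I/2) * Qb w)) := by
      funext w
      rw [h1, im_eq_comb]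
    rw [e]; exact key (-(Complex.I)/2) (Complex.I/2) z hz
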